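/- For every minimal conformation of length N > 6, its type sequence is admissible: it is a contiguous subword (factor) of some finite concatenation of copies of the words α = →1→2←2←1 and β = →1←1. -/

import Mathlib

/-- Points of the cubic lattice `ℤ³`. -/
abbrev P3 : Type := Fin 3 → ℤ

def e1 : P3 := ![1, 0, 0]
def e2 : P3 := ![0, 1, 0]
def e3 : P3 := ![0, 0, 1]

/-- Squared Euclidean norm of an integer vector; it equals `1` iff the
Euclidean norm equals `1`. -/
def sqNorm (v : P3) : ℤ := ∑ k, (v k) ^ 2

/-- A conformation of length `N`: an injective map on `{1, …, N}` whose
consecutive steps have Euclidean length one. -/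
def IsConformation (N : ℕ) (Γ : ℕ → P3) : Prop :=
  Set.InjOn Γ (Set.Icc 1 N) ∧ ∀ i, 1 ≤ i → i < N → sqNorm (Γ (i + 1) - Γ i) = 1

/-- A lattice rotation: an orthogonal integer matrix of determinant one
(equivalently, a linear isometry of `ℝ³` mapping `ℤ³` onto `ℤ³` with
determinant one). -/
def IsLatticeRotation (R : Matrix (Fin 3) (Fin 3) ℤ) : Prop :=
  R.transpose * R = 1 ∧ R.det = 1

/-- Equivalence of length-5 conformations: `Δ' k = R (Δ k) + t` for a lattice
rotation `R` and translation `t ∈ ℤ³`. -/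
def Equiv5 (Δ Δ' : Fin 5 → P3) : Prop :=
  ∃ (R : Matrix (Fin 3) (Fin 3) ℤ) (t : P3),
    IsLatticeRotation R ∧ ∀ k, Δ' k = R.mulVec (Δ k) + t

/-- Reversal of a length-5 conformation (`k ↦ Δ (6 - k)` in 1-based indexing). -/
def rev5 (Δ : Fin 5 → P3) : Fin 5 → P3 := fun k => Δ k.rev

/-- Conformation 1: vertices (0,0,0), (1,0,0), (1,1,0), (0,1,0), (0,1,1). -/
def conf1 : Fin 5 → P3 := ![![0, 0, 0], ![1, 0, 0], ![1, 1, 0], ![0, 1, 0], ![0, 1, 1]]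

/-- Conformation 2: vertices (0,0,0), (0,1,0), (−1,1,0), (−1,1,1), (−1,0,1). -/
def conf2 : Fin 5 → P3 := ![![0, 0, 0], ![0, 1, 0], ![-1, 1, 0], ![-1, 1, 1], ![-1, 0, 1]]

/-- The `i`-th window of `Γ`: the 5-tuple `(Γ(i-2), …, Γ(i+2))`. -/
def window (Γ : ℕ → P3) (i : ℕ) : Fin 5 → P3 := fun k => Γ (i - 2 + (k : ℕ))

/-- `Φ(Δ) = 1`: the 5-tuple `Δ` or its reversal is equivalent to
conformation 1 or to conformation 2. -/
def WindowGood (Δ : Fin 5 → P3) : Prop :=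
  Equiv5 Δ conf1 ∨ Equiv5 (rev5 Δ) conf1 ∨ Equiv5 Δ conf2 ∨ Equiv5 (rev5 Δ) conf2

open Classical in
/-- The function `Φ` on length-5 conformations. -/
noncomputable def Phi (Δ : Fin 5 → P3) : ℤ := if WindowGood Δ then 1 else 0

/-- The energy `E₅(Γ) = −Σ_{i=3}^{N−2} Φ(Γ_i)`. -/
noncomputable def E5 (N : ℕ) (Γ : ℕ → P3) : ℤ :=
  -∑ i ∈ Finset.Icc 3 (N - 2), Phi (window Γ i)

/-- A minimal conformation: a conformation all of whose windows satisfy `Φ = 1`. -/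
def IsMinimal (N : ℕ) (Γ : ℕ → P3) : Prop :=
  IsConformation N Γ ∧ ∀ i, 3 ≤ i → i ≤ N - 2 → WindowGood (window Γ i)

/-- The walk starting at the origin (in 1-based indexing) whose steps
cyclically repeat the given list. -/
def cyclicWalk (steps : List P3) : ℕ → P3
  | 0 => 0
  | 1 => 0
  | n + 2 => cyclicWalk steps (n + 1) + steps.getD (n % steps.length) 0

/-- The 16-term step sequence of the lattice α-helix. -/
def alphaStepList : List P3 :=
  [e1, e2, -e1, e3, -e2, e1, e2, e3, -e1, -e2, e1, e3, e2, -e1, -e2, e3]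

/-- The 4-term step sequence of the lattice β-strand. -/
def betaStepList : List P3 := [e1, e2, -e1, e3]

/-- The lattice α-helix (`H(1) = 0`, steps cyclically repeating `alphaStepList`). -/
def alphaHelix : ℕ → P3 := cyclicWalk alphaStepList

/-- The lattice β-strand (`B(1) = 0`, steps cyclically repeating `betaStepList`). -/
def betaStrand : ℕ → P3 := cyclicWalk betaStepList

/-- The four directed types of windows. -/
inductive DType : Type
  | r1  -- →1
  | l1  -- ←1
  | r2  -- →2
  | l2  -- ←2
deriving DecidableEq

/-- A window `Δ` has directed type `→1` (resp. `→2`) if it is equivalent to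
conformation 1 (resp. 2), and `←1` (resp. `←2`) if its reversal is. -/
def HasType (Δ : Fin 5 → P3) : DType → Prop
  | DType.r1 => Equiv5 Δ conf1
  | DType.l1 => Equiv5 (rev5 Δ) conf1
  | DType.r2 => Equiv5 Δ conf2
  | DType.l2 => Equiv5 (rev5 Δ) conf2

/-- The six allowed ordered pairs of directed types of consecutive windows:
(→1,←1), (←1,→1), (→1,→2), (→2,←2), (←2,←1), (←2,→2). -/
def allowedPairs : List (DType × DType) :=
  [(DType.r1, DType.l1), (DType.l1, DType.r1), (DType.r1, DType.r2),
   (DType.r2, DType.l2), (DType.l2, DType.l1), (DType.l2, DType.r2)]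

/-- `w` is the type sequence of `Γ` (a conformation of length `N`):
`w` has length `N − 4` and its `j`-th letter is the directed type of the
window `Γ_{3+j}`, `j = 0, …, N−5`. -/
def HasTypeSeq (N : ℕ) (Γ : ℕ → P3) (w : List DType) : Prop :=
  w.length = N - 4 ∧ ∀ j (h : j < w.length), HasType (window Γ (3 + j)) (w.get ⟨j, h⟩)

/-- The word `α = →1→2←2←1`. -/
def wordAlpha : List DType := [DType.r1, DType.r2, DType.l2, DType.l1]

/-- The word `β = →1←1`. -/
def wordBeta : List DType := [DType.r1, DType.l1]

/-- `v` is a finite concatenation of copies of the words `α` and `β`. -/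
def IsABConcat (v : List DType) : Prop :=
  ∃ L : List (List DType), (∀ u ∈ L, u = wordAlpha ∨ u = wordBeta) ∧ v = L.flatten

/-- A word is admissible if it is a contiguous subword (factor) of some finite
concatenation of copies of `α` and `β`. -/
def Admissible (w : List DType) : Prop := ∃ v, IsABConcat v ∧ w <:+: v

/-- The two kinds of monomers. -/
inductive AB : Type
  | A
  | B
deriving DecidableEq

/-- The number of occurrences of the letter `c` in the `i`-th 5-tuple
`S(i−2), …, S(i+2)` of the sequence `S`. -/
def countLetter (c : AB) (S : ℕ → AB) (i : ℕ) : ℕ :=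
  ((Finset.Icc (i - 2) (i + 2)).filter fun k => S k = c).card

open Classical in
/-- `Φ₁(Δ) = 1` iff `Δ` or its reversal is equivalent to conformation 1. -/
noncomputable def Phi1 (Δ : Fin 5 → P3) : ℝ :=
  if Equiv5 Δ conf1 ∨ Equiv5 (rev5 Δ) conf1 then 1 else 0

open Classical in
/-- `Φ₂(Δ) = 1` iff `Δ` or its reversal is equivalent to conformation 2. -/
noncomputable def Phi2 (Δ : Fin 5 → P3) : ℝ :=
  if Equiv5 Δ conf2 ∨ Equiv5 (rev5 Δ) conf2 then 1 else 0

/-- The heteropolymer energy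
`E₅′(S,Γ) = −Σᵢ [#_B(Sᵢ)(Φ₁(Γᵢ) + ε Φ₂(Γᵢ)) + #_A(Sᵢ)(Φ₂(Γᵢ) + ε Φ₁(Γᵢ))]`. -/
noncomputable def E5' (ε : ℝ) (S : ℕ → AB) (N : ℕ) (Γ : ℕ → P3) : ℝ :=
  -∑ i ∈ Finset.Icc 3 (N - 2),
    ((countLetter AB.B S i : ℝ) * (Phi1 (window Γ i) + ε * Phi2 (window Γ i)) +
      (countLetter AB.A S i : ℝ) * (Phi2 (window Γ i) + ε * Phi1 (window Γ i)))


/-!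
Each directed type fixes the four bonds of a window up to a lattice rotation. Consecutive
windows share three bonds, so the Gram matrix and determinant of these bonds must be the same
whichever of the two windows they are read from; a finite check leaves exactly the six allowed
pairs. In a window of type `→2` or `←2` the last bond is minus the first, so three consecutive
such windows close up into the cycle `Γ (m + 6) = Γ m`, contradicting injectivity. As `N > 6`,
every pair `←2 →2` has a neighbour that completes it to such a triple, and the remaining five
transitions are those of the automaton reading words in `{α, β}*`.
-/

open Matrix DType

section Rotation

variable {n R : Type*} [Fintype n] [DecidableEq n] [CommRing R] {Q : Matrix n n R}

lemma dotProduct_mulVec_mulVec (hQ : Qᵀ * Q = 1) (u v : n → R) :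
    Q *ᵥ u ⬝ᵥ Q *ᵥ v = u ⬝ᵥ v := by
  rw [dotProduct_mulVec, ← mulVec_transpose, mulVec_mulVec, hQ, one_mulVec]

lemma det_of_mulVec (u : n → n → R) : (of fun i => Q *ᵥ u i).det = (of u).det * Q.det := by
  have : (of fun i => Q *ᵥ u i) = of u * Qᵀ := by
    ext i j
    simp [mul_apply, mulVec, dotProduct, mul_comm]
  rw [this, det_mul, det_transpose]

end Rotation

def shape (u : Fin 3 → P3) : (Fin 3 → Fin 3 → ℤ) × ℤ :=
  (fun j k => u j ⬝ᵥ u k, (of u).det)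

lemma shape_mulVec {Q : Matrix (Fin 3) (Fin 3) ℤ} (hQ : IsLatticeRotation Q) (u : Fin 3 → P3) :
    shape (fun k => Q *ᵥ u k) = shape u := by
  simp only [shape, dotProduct_mulVec_mulVec hQ.1, det_of_mulVec, hQ.2, mul_one]

def bonds (Δ : Fin 5 → P3) (k : Fin 4) : P3 := Δ k.succ - Δ k.castSucc

def typeConf : DType → Fin 5 → P3
  | r1 => conf1
  | l1 => rev5 conf1
  | r2 => conf2
  | l2 => rev5 conf2

lemma Equiv5.of_rev5 {Δ C : Fin 5 → P3} (h : Equiv5 (rev5 Δ) C) : Equiv5 Δ (rev5 C) := by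
  obtain ⟨R, t, hR, h⟩ := h
  exact ⟨R, t, hR, fun k => by simpa [rev5] using h k.rev⟩

lemma HasType.equiv5 {Δ : Fin 5 → P3} {t : DType} (h : HasType Δ t) :
    Equiv5 Δ (typeConf t) := by
  cases t
  exacts [h, h.of_rev5, h, h.of_rev5]

lemma Equiv5.bonds_eq {Δ C : Fin 5 → P3} (h : Equiv5 Δ C) :
    ∃ Q, IsLatticeRotation Q ∧ ∀ k, bonds Δ k = Q *ᵥ bonds C k := by
  obtain ⟨R, t, ⟨hO, hD⟩, hC⟩ := h
  refine ⟨Rᵀ, ⟨by rw [transpose_transpose, mul_eq_one_comm.mp hO], by rw [det_transpose, hD]⟩,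
    fun k => ?_⟩
  rw [bonds, bonds, hC, hC, add_sub_add_right_eq_sub, ← mulVec_sub, mulVec_mulVec, hO,
    one_mulVec]

lemma exists_hasType {Δ : Fin 5 → P3} (h : WindowGood Δ) : ∃ t, HasType Δ t := by
  rcases h with h | h | h | h
  exacts [⟨r1, h⟩, ⟨l1, h⟩, ⟨r2, h⟩, ⟨l2, h⟩]

lemma bonds_three_eq_neg_zero {t : DType} (ht : t = r2 ∨ t = l2) :
    bonds (typeConf t) 3 = -bonds (typeConf t) 0 := by
  rcases ht with rfl | rfl <;> decide

lemma eq_of_bonds_antiperiodic {G : Type*} [AddCommGroup G] {f : ℕ → G} {m : ℕ}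
    (h₀ : f (m + 4) - f (m + 3) = -(f (m + 1) - f m))
    (h₁ : f (m + 5) - f (m + 4) = -(f (m + 2) - f (m + 1)))
    (h₂ : f (m + 6) - f (m + 5) = -(f (m + 3) - f (m + 2))) :
    f (m + 6) = f m := by
  rw [← sub_eq_zero]
  calc f (m + 6) - f m
      = (f (m + 4) - f (m + 3) + (f (m + 1) - f m))
        + (f (m + 5) - f (m + 4) + (f (m + 2) - f (m + 1)))
        + (f (m + 6) - f (m + 5) + (f (m + 3) - f (m + 2))) := by abel
    _ = 0 := by rw [h₀, h₁, h₂]; abel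

section Windows

variable {N m : ℕ} {Γ : ℕ → P3} {t t' : DType}

lemma bonds_window (Γ : ℕ → P3) (m : ℕ) (k : Fin 4) :
    bonds (window Γ (m + 2)) k = Γ (m + k + 1) - Γ (m + k) := by
  simp [bonds, window, add_assoc]

lemma allowedPair_of_hasType (h : HasType (window Γ (m + 2)) t)
    (h' : HasType (window Γ (m + 3)) t') : (t, t') ∈ allowedPairs := by
  obtain ⟨Q, hQ, hb⟩ := h.equiv5.bonds_eq
  obtain ⟨Q', hQ', hb'⟩ := h'.equiv5.bonds_eq
  have hshape : shape (fun k => bonds (typeConf t) k.succ) =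
      shape (fun k => bonds (typeConf t') k.castSucc) :=
    calc _ = shape (fun k => Q *ᵥ bonds (typeConf t) k.succ) := (shape_mulVec hQ _).symm
      _ = shape (fun k => Q' *ᵥ bonds (typeConf t') k.castSucc) := by
        congr 1
        funext k
        rw [← hb, ← hb', bonds_window, bonds_window Γ (m + 1)]
        simp [add_assoc, add_comm 1]
      _ = _ := shape_mulVec hQ' _
  revert hshape
  cases t <;> cases t' <;> decide

lemma HasType.bond_antiperiodic (h : HasType (window Γ (m + 2)) t) (ht : t = r2 ∨ t = l2) :
    Γ (m + 4) - Γ (m + 3) = -(Γ (m + 1) - Γ m) := by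
  obtain ⟨Q, -, hb⟩ := h.equiv5.bonds_eq
  have h₃ := hb 3
  have h₀ := hb 0
  rw [bonds_window] at h₃ h₀
  rw [bonds_three_eq_neg_zero ht, mulVec_neg, ← h₀] at h₃
  simpa using h₃

lemma false_of_type2_triple (hΓ : IsConformation N Γ) (hm : 1 ≤ m) (hmN : m + 6 ≤ N)
    {t₀ t₁ t₂ : DType} (h₀ : HasType (window Γ (m + 2)) t₀)
    (h₁ : HasType (window Γ (m + 3)) t₁) (h₂ : HasType (window Γ (m + 4)) t₂)
    (ht : ∀ t ∈ [t₀, t₁, t₂], t = r2 ∨ t = l2) : False := by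
  simp only [List.mem_cons, List.not_mem_nil, or_false, forall_eq_or_imp, forall_eq] at ht
  have hcycle : Γ (m + 6) = Γ m := eq_of_bonds_antiperiodic (h₀.bond_antiperiodic ht.1)
    (h₁.bond_antiperiodic (m := m + 1) ht.2.1) (h₂.bond_antiperiodic (m := m + 2) ht.2.2)
  have := hΓ.1 (by simp only [Set.mem_Icc]; omega) (by simp only [Set.mem_Icc]; omega) hcycle
  omega

def Follows (a b : DType) : Prop := (a, b) ∈ allowedPairs ∧ (a, b) ≠ (l2, r2)

instance : DecidableRel Follows := fun _ _ => inferInstanceAs (Decidable (_ ∧ _))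

lemma follows_of_hasType (hΓ : IsMinimal N Γ) (hN : 6 < N) (hm : 1 ≤ m) (hmN : m + 5 ≤ N)
    (h : HasType (window Γ (m + 2)) t) (h' : HasType (window Γ (m + 3)) t') :
    Follows t t' := by
  refine ⟨allowedPair_of_hasType h h', ?_⟩
  rintro ⟨⟨⟩⟩
  obtain ⟨k, rfl⟩ : ∃ k, m = k + 1 := ⟨m - 1, by omega⟩
  rcases Nat.eq_zero_or_pos k with rfl | hk
  · obtain ⟨s, hs⟩ := exists_hasType (hΓ.2 5 (by omega) (by omega))
    obtain rfl : s = l2 := by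
      have := allowedPair_of_hasType (m := 2) h' hs
      revert this
      cases s <;> decide
    exact false_of_type2_triple hΓ.1 le_rfl (by omega) h h' hs (by decide)
  · obtain ⟨s, hs⟩ := exists_hasType (hΓ.2 (k + 2) (by omega) (by omega))
    obtain rfl : s = r2 := by
      have := allowedPair_of_hasType hs h
      revert this
      cases s <;> decide
    exact false_of_type2_triple hΓ.1 hk (by omega) hs h h' (by decide)

lemma exists_hasTypeSeq (hΓ : ∀ i, 3 ≤ i → i ≤ N - 2 → WindowGood (window Γ i)) :
    ∃ w, HasTypeSeq N Γ w := by
  choose τ hτ using fun j (hj : j < N - 4) => exists_hasType (hΓ (3 + j) (by omega) (by omega))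
  exact ⟨List.ofFn fun j : Fin (N - 4) => τ j j.2, by simp,
    fun j hj => by simpa using hτ j _⟩

lemma HasTypeSeq.isChain_follows (hΓ : IsMinimal N Γ) (hN : 6 < N) {w : List DType}
    (hw : HasTypeSeq N Γ w) : w.IsChain Follows := by
  rw [List.isChain_iff_getElem]
  intro j hj
  have := hw.1
  exact follows_of_hasType (m := j + 1) hΓ hN (by omega) (by omega)
    (by simpa [add_comm, add_left_comm] using hw.2 j (by omega))
    (by simpa [add_comm, add_left_comm] using hw.2 (j + 1) hj)

end Windows

lemma IsABConcat.append_word {v x : List DType} (hv : IsABConcat v)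
    (hx : x ∈ [wordAlpha, wordBeta]) : IsABConcat (v ++ x) := by
  obtain ⟨L, hL, rfl⟩ := hv
  refine ⟨L ++ [x], fun u hu => ?_, by simp⟩
  simp only [List.mem_append, List.mem_singleton] at hu
  rcases hu with hu | rfl
  · exact hL u hu
  · simpa using hx

/-- The words `u` such that `u ++ [a]` is a prefix of `α` or of `β`. -/
def leads : DType → List (List DType)
  | r1 => [[]]
  | l1 => [[r1], [r1, r2, l2]]
  | r2 => [[r1]]
  | l2 => [[r1, r2]]

lemma exists_prefix_word_of_mem_leads :
    ∀ a, ∀ u ∈ leads a, ∃ x ∈ [wordAlpha, wordBeta], u ++ [a] <+: x := by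
  intro a
  cases a <;> decide

lemma mem_leads_of_follows : ∀ a b, Follows a b → ∀ u ∈ leads a,
    (u ++ [a] ∈ [wordAlpha, wordBeta] ∧ [] ∈ leads b) ∨ u ++ [a] ∈ leads b := by
  intro a b
  cases a <;> cases b <;> decide

lemma exists_isABConcat_of_isChain {v : List DType} (hv : IsABConcat v) {a : DType}
    {w u : List DType} (hw : (a :: w).IsChain Follows) (hu : u ∈ leads a) :
    ∃ s, IsABConcat (v ++ u ++ a :: w ++ s) := by
  induction w generalizing v a u with
  | nil =>
    obtain ⟨x, hx, s, rfl⟩ := exists_prefix_word_of_mem_leads a u hu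
    exact ⟨s, by simpa using hv.append_word hx⟩
  | cons b w ih =>
    obtain ⟨hab, hbw⟩ := List.isChain_cons_cons.mp hw
    rcases mem_leads_of_follows a b hab u hu with ⟨hword, hb⟩ | hb
    · obtain ⟨s, hs⟩ := ih (hv.append_word hword) hbw hb
      exact ⟨s, by simpa using hs⟩
    · obtain ⟨s, hs⟩ := ih hv hbw hb
      exact ⟨s, by simpa using hs⟩

lemma admissible_of_isChain : ∀ {w : List DType}, w.IsChain Follows → Admissible w
  | [], _ => ⟨[], ⟨[], by simp, rfl⟩, List.infix_refl _⟩
  | a :: w, hw => by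
    obtain ⟨u, hu⟩ : ∃ u, u ∈ leads a := by cases a <;> simp [leads]
    obtain ⟨s, hs⟩ := exists_isABConcat_of_isChain ⟨[], by simp, rfl⟩ hw hu
    exact ⟨_, hs, u, s, by simp⟩

/-- the type sequence of any minimal conformation of length
`N > 6` is admissible: it is a contiguous subword of some finite concatenation
of copies of the words `α = →1→2←2←1` and `β = →1←1`. -/
theorem minimal_type_sequence_admissible (N : ℕ) (hN : 6 < N) (Γ : ℕ → P3)
    (hΓ : IsMinimal N Γ) :
    (∃ w, HasTypeSeq N Γ w) ∧ ∀ w, HasTypeSeq N Γ w → Admissible w :=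
  ⟨exists_hasTypeSeq hΓ.2, fun _ hw => admissible_of_isChain (hw.isChain_follows hΓ hN)⟩
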